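/- The least upper bound of any strictly increasing sequence of finite partial evaluation trees is an infinite well-formed partial evaluation tree; conversely, every well-formed infinite partial evaluation tree is the least upper bound of some strictly increasing sequence of finite partial evaluation trees. -/

import Mathlib

/-- Judgements over configurations `C` and extended results `Option R`
    (`none` stands for the special extra result such as `?`, `wrong`, or `∞`). -/
abbrev Judg (C R : Type) := C × Option R

/-- Lift a complete judgement to an extended judgement. -/
def liftJ {C R : Type} (j : C × R) : Judg C R := (j.1, some j.2)

/-- Bounded-premises condition. -/
def BP {C R : Type} (Rules : Set (List (C × R) × (C × R))) : Prop :=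
  ∀ c : C, ∃ b : ℕ, ∀ js res, (js, (c, res)) ∈ Rules → js.length ≤ b

/-- The extended rule set `Rules_?`: original rules (lifted), start axioms
    `c ⇒ ?`, and partial rules. -/
def RulesQ {C R : Type} (Rules : Set (List (C × R) × (C × R))) :
    Set (List (Judg C R) × Judg C R) :=
  { r | (∃ c : C, r = ([], (c, none)))
      ∨ (∃ (js : List (C × R)) (c : C) (res : R), (js, (c, res)) ∈ Rules ∧ r = (js.map liftJ, (c, some res)))
      ∨ (∃ (js : List (C × R)) (c : C) (res : R) (i : ℕ) (hi : i < js.length) (u : Option R),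
          (js, (c, res)) ∈ Rules ∧
          r = ((js.take i).map liftJ ++ [((js[i]'hi).1, u)], (c, none))) }

/-- Ordered trees labelled in `L`: partial functions from positions (lists of
    child indices) to labels, with nonempty, prefix-closed,
    sibling-downward-closed domain. -/
structure OTree (L : Type) where
  label : List ℕ → Option L
  root_isSome : (label []).isSome
  pref : ∀ α n, (label (α ++ [n])).isSome → (label α).isSome
  sib : ∀ α n k, (label (α ++ [n])).isSome → k ≤ n → (label (α ++ [k])).isSome

/-- A tree is an evaluation tree in a rule set: at every node, the ordered
    children labels together with the node label form a rule. -/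
def IsTreeIn {L : Type} (Rules : Set (List L × L)) (t : OTree L) : Prop :=
  ∀ α l, t.label α = some l →
    ∃ ps : List L, (∀ i : ℕ, t.label (α ++ [i]) = ps[i]?) ∧ (ps, l) ∈ Rules

/-- Partial evaluation trees: evaluation trees in `Rules_?`. -/
def IsPET {C R : Type} (Rules : Set (List (C × R) × (C × R)))
    (t : OTree (Judg C R)) : Prop :=
  IsTreeIn (RulesQ Rules) t

/-- The refinement relation `⊑` on trees labelled by possibly-incomplete
    judgements. -/
def TreeLE {C R : Type} (t t' : OTree (Judg C R)) : Prop :=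
  (∀ α, (t.label α).isSome → (t'.label α).isSome) ∧
  ∀ α c u, t.label α = some (c, u) →
    (∃ (u' : Option R), t'.label α = some (c, u')) ∧
    (u.isSome → ∀ β, t.label (α ++ β) = t'.label (α ++ β))

/-- Strict refinement `⊏`. -/
def TreeLT {C R : Type} (t t' : OTree (Judg C R)) : Prop :=
  TreeLE t t' ∧ t ≠ t'

/-- A tree is finite if its domain is finite. -/
def TreeFinite {L : Type} (t : OTree L) : Prop :=
  Set.Finite {α | (t.label α).isSome}

/-- Well-formedness: every subtree rooted at a complete node is finite. -/
def WellFormed {C R : Type} (t : OTree (Judg C R)) : Prop :=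
  ∀ α c r, t.label α = some (c, some r) →
    Set.Finite {β | (t.label (α ++ β)).isSome}

/-- `t` is a least upper bound of the sequence `f` w.r.t. `⊑`. -/
def IsLubSeq {C R : Type} (f : ℕ → OTree (Judg C R)) (t : OTree (Judg C R)) : Prop :=
  (∀ n, TreeLE (f n) t) ∧ ∀ t', (∀ n, TreeLE (f n) t') → TreeLE t t'

/-- Inductive derivability in a rule set with finite-list premises. -/
inductive IndDerives {J : Type} (Rules : Set (List J × J)) : J → Prop where
  | node (ps : List J) (j : J) : (ps, j) ∈ Rules →
      (∀ p ∈ ps, IndDerives Rules p) → IndDerives Rules j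

/-- A set of judgements is consistent w.r.t. a rule set. -/
def ConsistentL {J : Type} (Rules : Set (List J × J)) (X : Set J) : Prop :=
  ∀ j ∈ X, ∃ (ps : List J), (ps, j) ∈ Rules ∧ ∀ p ∈ ps, p ∈ X

/-- Coinductive derivability: membership in some consistent set. -/
def CoDerives {J : Type} (Rules : Set (List J × J)) (j : J) : Prop :=
  ∃ (X : Set J), ConsistentL Rules X ∧ j ∈ X

/-- Derivability in a generalised inference system (rules + corules):
    membership in a consistent set all of whose elements have a finite
    derivation using both rules and corules. -/
def GenDerives {J : Type} (rules corules : Set (List J × J)) (j : J) : Prop :=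
  ∃ (X : Set J), ConsistentL rules X ∧ (∀ x ∈ X, IndDerives (rules ∪ corules) x) ∧ j ∈ X

/-!
Along a `⊑`-chain the label at a position changes at most twice (absent, then incomplete,
then complete, after which the whole subtree below it is frozen), so the labels stabilise and
the eventual labels form the least upper bound. This limit is a partial evaluation tree because,
by bounded premises, the finitely many possible children of a node stabilise simultaneously;
it is well formed because a complete node is frozen together with its finite subtree in some
member of the chain; and it is infinite because only finitely many trees lie below a finite tree,
which a strictly increasing chain would exhaust.

Conversely, a well-formed infinite tree is the least upper bound of its truncations at depth `n`
that keep the whole subtree below every complete node of depth at most `n`. These are finite by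
finite branching and well-formedness, and each adds a node, because a node outside the `n`-th
truncation has an ancestor of depth `n + 1` outside it as well.
-/

open Filter

theorem OTree.ext {L : Type} {t t' : OTree L} (h : t.label = t'.label) : t = t' := by
  cases t; cases t'; cases h; rfl

theorem OTree.isSome_of_prefix {L : Type} (t : OTree L) {α β : List ℕ} (hβα : β <+: α)
    (hα : (t.label α).isSome) : (t.label β).isSome := by
  obtain ⟨δ, rfl⟩ := hβα
  induction δ using List.reverseRecOn with
  | nil => simpa using hα
  | append_singleton δ i ih => exact ih (t.pref _ i (by simpa only [List.append_assoc] using hα))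

theorem IsTreeIn.finite_children {L : Type} {Rs : Set (List L × L)} {t : OTree L}
    (ht : IsTreeIn Rs t) (α : List ℕ) : {i | (t.label (α ++ [i])).isSome}.Finite := by
  by_cases hα : (t.label α).isSome
  · obtain ⟨l, hl⟩ := Option.isSome_iff_exists.mp hα
    obtain ⟨ps, hps, -⟩ := ht α l hl
    exact (Set.finite_Iio ps.length).subset fun i hi => by simpa [hps i] using hi
  · exact Set.finite_empty.subset fun i hi => hα (t.pref α i hi)

theorem IsTreeIn.finite_setOf_length_le {L : Type} {Rs : Set (List L × L)} {t : OTree L}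
    (ht : IsTreeIn Rs t) (n : ℕ) : {α | (t.label α).isSome ∧ α.length ≤ n}.Finite := by
  induction n with
  | zero =>
    refine (Set.finite_singleton []).subset ?_
    rintro α ⟨-, hα⟩
    simpa using hα
  | succ n ih =>
    refine ((ih.biUnion fun α _ => (ht.finite_children α).image (α ++ [·])).insert []).subset ?_
    rintro α ⟨hα, hlen⟩
    rcases List.eq_nil_or_concat' α with rfl | ⟨β, i, rfl⟩
    · exact Set.mem_insert _ _
    · exact Or.inr (Set.mem_biUnion ⟨t.pref β i hα, by simpa using hlen⟩ ⟨i, hα, rfl⟩)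

section Refinement

variable {C R : Type}

theorem TreeLE.label_append_eq {s t : OTree (Judg C R)} (h : TreeLE s t) {α : List ℕ} {c : C}
    {r : R} (hs : s.label α = some (c, some r)) (β : List ℕ) :
    t.label (α ++ β) = s.label (α ++ β) :=
  ((h.2 α c _ hs).2 rfl β).symm

theorem TreeLE.label_eq_of_complete {s t : OTree (Judg C R)} (h : TreeLE s t) {α : List ℕ}
    {c : C} {r : R} (hs : s.label α = some (c, some r)) : t.label α = some (c, some r) := by
  simpa [hs] using h.label_append_eq hs []

theorem TreeLE.trans {t₁ t₂ t₃ : OTree (Judg C R)} (h₁₂ : TreeLE t₁ t₂) (h₂₃ : TreeLE t₂ t₃) :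
    TreeLE t₁ t₃ := by
  refine ⟨fun α h => h₂₃.1 α (h₁₂.1 α h), fun α c u h => ?_⟩
  obtain ⟨⟨u₂, h₂⟩, -⟩ := h₁₂.2 α c u h
  refine ⟨(h₂₃.2 α c u₂ h₂).1, fun hu β => ?_⟩
  obtain ⟨r, rfl⟩ := Option.isSome_iff_exists.mp hu
  rw [h₂₃.label_append_eq (h₁₂.label_eq_of_complete h), h₁₂.label_append_eq h]

theorem TreeLE.antisymm {s t : OTree (Judg C R)} (hst : TreeLE s t) (hts : TreeLE t s) :
    s = t := by
  refine OTree.ext (funext fun α => ?_)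
  cases hs : s.label α with
  | none =>
    cases ht : t.label α with
    | none => rfl
    | some _ => simpa [hs] using hts.1 α (by simp [ht])
  | some j =>
    obtain ⟨c, u⟩ := j
    obtain ⟨u', ht⟩ := (hst.2 α c u hs).1
    cases u with
    | some r => exact (hst.label_eq_of_complete hs).symm
    | none =>
      cases u' with
      | none => exact ht.symm
      | some r => simp [hts.label_eq_of_complete ht] at hs

instance : PartialOrder (OTree (Judg C R)) where
  le := TreeLE
  le_refl _ := ⟨fun _ h => h, fun _ _ _ h => ⟨⟨_, h⟩, fun _ _ => rfl⟩⟩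
  le_trans _ _ _ := TreeLE.trans
  le_antisymm _ _ := TreeLE.antisymm

theorem TreeLE.of_forall_exists_ge {s t : OTree (Judg C R)}
    (h : ∀ α, ∃ u, s ≤ u ∧ u.label α = t.label α) : s ≤ t := by
  refine ⟨fun α hα => ?_, fun α c x hα => ⟨?_, fun hx β => ?_⟩⟩
  · obtain ⟨u, hsu, hu⟩ := h α
    exact hu ▸ hsu.1 α hα
  · obtain ⟨u, hsu, hu⟩ := h α
    exact hu ▸ (hsu.2 α c x hα).1
  · obtain ⟨u, hsu, hu⟩ := h (α ++ β)
    exact ((hsu.2 α c x hα).2 hx β).trans hu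

theorem TreeLE.of_forall_exists_le {s t : OTree (Judg C R)}
    (h : ∀ α, ∃ u, u ≤ s ∧ u ≤ t ∧ u.label α = s.label α) : s ≤ t := by
  refine ⟨fun α hα => ?_, fun α c x hα => ?_⟩
  · obtain ⟨u, -, hut, hu⟩ := h α
    exact hut.1 α (hu ▸ hα)
  · obtain ⟨u, hus, hut, hu⟩ := h α
    rw [← hu] at hα
    exact ⟨(hut.2 α c x hα).1,
      fun hx β => ((hus.2 α c x hα).2 hx β).symm.trans ((hut.2 α c x hα).2 hx β)⟩

def labelsBelow (t : OTree (Judg C R)) (α : List ℕ) : Set (Option (Judg C R)) :=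
  {none, (t.label α).map fun j => (j.1, none), t.label α}

theorem label_mem_labelsBelow {s t : OTree (Judg C R)} (h : s ≤ t) (α : List ℕ) :
    s.label α ∈ labelsBelow t α := by
  cases hs : s.label α with
  | none => exact Or.inl rfl
  | some j =>
    obtain ⟨c, u⟩ := j
    obtain ⟨u', ht⟩ := (h.2 α c u hs).1
    cases u with
    | none => exact Or.inr (Or.inl (by simp [ht]))
    | some r => exact Or.inr (Or.inr (h.label_eq_of_complete hs).symm)

theorem finite_setOf_le {t : OTree (Judg C R)} (ht : TreeFinite t) : {s | s ≤ t}.Finite := by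
  have : Finite {α | (t.label α).isSome} := ht.to_subtype
  have hinj : Set.InjOn (fun s (α : {α | (t.label α).isSome}) => s.label α) {s | s ≤ t} := by
    refine fun s hs s' hs' h => OTree.ext (funext fun α => ?_)
    by_cases hα : (t.label α).isSome
    · exact congrFun h ⟨α, hα⟩
    · rw [Option.not_isSome_iff_eq_none.mp (mt (hs.1 α) hα),
        Option.not_isSome_iff_eq_none.mp (mt (hs'.1 α) hα)]
  have hlabels : {g : {α | (t.label α).isSome} → _ | ∀ α, g α ∈ labelsBelow t α.1}.Finite :=
    Set.Finite.pi' fun _ => ((Set.finite_singleton _).insert _).insert _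
  refine Set.Finite.of_finite_image (hlabels.subset ?_) hinj
  rintro _ ⟨s, hs, rfl⟩ α
  exact label_mem_labelsBelow hs α

theorem not_treeFinite_of_strictMono {f : ℕ → OTree (Judg C R)} (hf : StrictMono f)
    {t : OTree (Judg C R)} (ht : ∀ n, f n ≤ t) : ¬ TreeFinite t := fun hfin =>
  Set.infinite_range_of_injective hf.injective
    ((finite_setOf_le hfin).subset (Set.range_subset_iff.mpr ht))

end Refinement

section Limit

variable {C R : Type} {f : ℕ → OTree (Judg C R)}

theorem exists_eventually_label_eq (hf : Monotone f) (α : List ℕ) :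
    ∃ x, ∀ᶠ n in atTop, (f n).label α = x := by
  suffices ∃ m, ∀ n ≥ m, (f n).label α = (f m).label α from
    let ⟨m, hm⟩ := this; ⟨_, eventually_atTop.mpr ⟨m, hm⟩⟩
  by_cases hcomplete : ∃ m c r, (f m).label α = some (c, some r)
  · obtain ⟨m, c, r, hm⟩ := hcomplete
    exact ⟨m, fun n hn => ((hf hn).label_eq_of_complete hm).trans hm.symm⟩
  have hincomplete {k c x} (h : (f k).label α = some (c, x)) : x = none := by
    cases x with
    | none => rfl
    | some r => exact absurd ⟨k, c, r, h⟩ hcomplete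
  by_cases hdefined : ∃ m, ((f m).label α).isSome
  · obtain ⟨m, hm⟩ := hdefined
    obtain ⟨⟨c, u⟩, hm⟩ := Option.isSome_iff_exists.mp hm
    refine ⟨m, fun n hn => ?_⟩
    obtain ⟨u', hn⟩ := ((hf hn).2 α c u hm).1
    rw [hm, hn, hincomplete hm, hincomplete hn]
  · push Not at hdefined
    exact ⟨0, fun n _ => by
      rw [Option.not_isSome_iff_eq_none.mp (hdefined n), Option.not_isSome_iff_eq_none.mp (hdefined 0)]⟩

noncomputable def chainLimit (hf : Monotone f) : OTree (Judg C R) where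
  label α := (exists_eventually_label_eq hf α).choose
  root_isSome := by
    obtain ⟨n, hn⟩ := (exists_eventually_label_eq hf []).choose_spec.exists
    exact hn ▸ (f n).root_isSome
  pref α k h := by
    obtain ⟨n, hn, hnk⟩ := ((exists_eventually_label_eq hf α).choose_spec.and
      (exists_eventually_label_eq hf (α ++ [k])).choose_spec).exists
    exact hn ▸ (f n).pref α k (hnk ▸ h)
  sib α k j h hjk := by
    obtain ⟨n, hnj, hnk⟩ := ((exists_eventually_label_eq hf (α ++ [j])).choose_spec.and
      (exists_eventually_label_eq hf (α ++ [k])).choose_spec).exists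
    exact hnj ▸ (f n).sib α k j (hnk ▸ h) hjk

theorem eventually_label_eq_chainLimit (hf : Monotone f) (α : List ℕ) :
    ∀ᶠ n in atTop, (f n).label α = (chainLimit hf).label α :=
  (exists_eventually_label_eq hf α).choose_spec

theorem le_chainLimit (hf : Monotone f) (n : ℕ) : f n ≤ chainLimit hf :=
  TreeLE.of_forall_exists_ge fun α =>
    let ⟨m, hnm, hm⟩ := ((eventually_ge_atTop n).and (eventually_label_eq_chainLimit hf α)).exists
    ⟨f m, hf hnm, hm⟩

theorem chainLimit_le (hf : Monotone f) {t : OTree (Judg C R)} (ht : ∀ n, f n ≤ t) :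
    chainLimit hf ≤ t :=
  TreeLE.of_forall_exists_le fun α =>
    let ⟨m, hm⟩ := (eventually_label_eq_chainLimit hf α).exists
    ⟨f m, le_chainLimit hf m, ht m, hm⟩

theorem wellFormed_chainLimit (hf : Monotone f) (hfin : ∀ n, TreeFinite (f n)) :
    WellFormed (chainLimit hf) := by
  intro α c r h
  obtain ⟨n, hn⟩ := (eventually_label_eq_chainLimit hf α).exists
  rw [← hn] at h
  have hsubtree : {β | ((chainLimit hf).label (α ++ β)).isSome} =
      (α ++ ·) ⁻¹' {γ | ((f n).label γ).isSome} := by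
    ext β
    simp only [Set.mem_ofPred_eq, Set.mem_preimage, (le_chainLimit hf n).label_append_eq h β]
  exact hsubtree ▸ (hfin n).preimage (List.append_right_injective α).injOn

theorem isTreeIn_chainLimit {Rs : Set (List (Judg C R) × Judg C R)}
    (hRs : ∀ l, ∃ b, ∀ ps, (ps, l) ∈ Rs → ps.length ≤ b) (hf : Monotone f)
    (hfRs : ∀ n, IsTreeIn Rs (f n)) : IsTreeIn Rs (chainLimit hf) := by
  intro α l hl
  obtain ⟨b, hb⟩ := hRs l
  have hroot := eventually_label_eq_chainLimit hf α
  have hchildren : ∀ᶠ n in atTop, ∀ i ∈ Finset.range b,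
      (f n).label (α ++ [i]) = (chainLimit hf).label (α ++ [i]) :=
    (Filter.eventually_all_finset _).mpr fun i _ => eventually_label_eq_chainLimit hf _
  obtain ⟨n, hn, hnc⟩ := (hroot.and hchildren).exists
  obtain ⟨ps, hps, hrule⟩ := hfRs n α l (hn.trans hl)
  refine ⟨ps, fun i => ?_, hrule⟩
  by_cases hi : i < b
  · rw [← hnc i (Finset.mem_range.mpr hi), hps]
  -- beyond the bound `b` no member of the chain, hence not the limit, has a child
  · obtain ⟨m, hm, hmi⟩ := (hroot.and (eventually_label_eq_chainLimit hf (α ++ [i]))).exists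
    obtain ⟨qs, hqs, hrule'⟩ := hfRs m α l (hm.trans hl)
    rw [← hmi, hqs, List.getElem?_eq_none ((hb qs hrule').trans (not_lt.mp hi)),
      List.getElem?_eq_none ((hb ps hrule).trans (not_lt.mp hi))]

theorem RulesQ.length_le {Rules : Set (List (C × R) × (C × R))} {c : C} {b : ℕ}
    (hb : ∀ js res, (js, (c, res)) ∈ Rules → js.length ≤ b) {ps : List (Judg C R)}
    {u : Option R} (h : (ps, (c, u)) ∈ RulesQ Rules) : ps.length ≤ b := by
  rcases h with ⟨c', h⟩ | ⟨js, c', res, hmem, h⟩ | ⟨js, c', res, i, hi, u', hmem, h⟩ <;>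
    simp only [Prod.mk.injEq] at h
  · simp [h.1]
  · obtain ⟨rfl, rfl, -⟩ := h
    simpa using hb js res hmem
  · obtain ⟨rfl, rfl, -⟩ := h
    have := hb js res hmem
    simp only [List.length_append, List.length_map, List.length_take, List.length_singleton]
    omega

theorem BP.rulesQ_length_le {Rules : Set (List (C × R) × (C × R))} (hbp : BP Rules)
    (l : Judg C R) : ∃ b, ∀ ps, (ps, l) ∈ RulesQ Rules → ps.length ≤ b :=
  let ⟨b, hb⟩ := hbp l.1
  ⟨b, fun _ h => RulesQ.length_le hb h⟩

end Limit

section Truncation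

variable {C R : Type} {t : OTree (Judg C R)} {n : ℕ} {α : List ℕ}

/-- `α` lies in the subtree of a complete node of depth at most `n`. -/
def HasCompleteAncestor (t : OTree (Judg C R)) (n : ℕ) (α : List ℕ) : Prop :=
  ∃ β c r, β <+: α ∧ β.length ≤ n ∧ t.label β = some (c, some r)

def truncSet (t : OTree (Judg C R)) (n : ℕ) : Set (List ℕ) :=
  {α | α.length ≤ n ∨ HasCompleteAncestor t n α}

theorem HasCompleteAncestor.of_prefix {β : List ℕ} (h : HasCompleteAncestor t n β)
    (hβα : β <+: α) : HasCompleteAncestor t n α :=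
  let ⟨γ, c, r, hγ, hlen, hc⟩ := h
  ⟨γ, c, r, hγ.trans hβα, hlen, hc⟩

theorem truncSet_mono {m : ℕ} (hnm : n ≤ m) : truncSet t n ⊆ truncSet t m := by
  rintro α (hlen | ⟨β, c, r, hβ, hlen, hc⟩)
  · exact Or.inl (hlen.trans hnm)
  · exact Or.inr ⟨β, c, r, hβ, hlen.trans hnm, hc⟩

theorem append_singleton_mem_truncSet {i : ℕ} :
    α ++ [i] ∈ truncSet t n ↔ α.length < n ∨ HasCompleteAncestor t n α := by
  simp only [truncSet, Set.mem_ofPred_eq, List.length_append, List.length_singleton]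
  constructor
  · rintro (hlen | ⟨β, c, r, hβ, hlen, hc⟩)
    · exact Or.inl hlen
    · rcases List.prefix_concat_iff.mp hβ with rfl | hβ
      · exact Or.inl (by simpa using hlen)
      · exact Or.inr ⟨β, c, r, hβ, hlen, hc⟩
  · rintro (hlen | h)
    · exact Or.inl hlen
    · exact Or.inr (h.of_prefix (List.prefix_append α [i]))

theorem append_mem_truncSet {c : C} {r : R} (hα : α ∈ truncSet t n)
    (hc : t.label α = some (c, some r)) (β : List ℕ) : α ++ β ∈ truncSet t n := by
  rcases hα with hlen | h
  · exact Or.inr ⟨α, c, r, List.prefix_append α β, hlen, hc⟩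
  · exact Or.inr (h.of_prefix (List.prefix_append α β))

open Classical in
noncomputable def trunc (t : OTree (Judg C R)) (n : ℕ) : OTree (Judg C R) where
  label α := if α ∈ truncSet t n then t.label α else none
  root_isSome := by
    rw [if_pos (show [] ∈ truncSet t n from Or.inl (Nat.zero_le n))]
    exact t.root_isSome
  pref α k h := by
    have hk : α ++ [k] ∈ truncSet t n := by
      by_contra hk
      simp [hk] at h
    rw [if_pos hk] at h
    have hα : α ∈ truncSet t n :=
      (append_singleton_mem_truncSet.mp hk).imp_left Nat.le_of_lt
    rw [if_pos hα]
    exact t.pref α k h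
  sib α k j h hjk := by
    have hk : α ++ [k] ∈ truncSet t n := by
      by_contra hk
      simp [hk] at h
    rw [if_pos hk] at h
    rw [if_pos (append_singleton_mem_truncSet.mpr (append_singleton_mem_truncSet.mp hk))]
    exact t.sib α k j h hjk

theorem trunc_label_of_mem (h : α ∈ truncSet t n) : (trunc t n).label α = t.label α :=
  if_pos h

theorem trunc_label_of_not_mem (h : α ∉ truncSet t n) : (trunc t n).label α = none :=
  if_neg h

theorem trunc_label_isSome :
    ((trunc t n).label α).isSome ↔ α ∈ truncSet t n ∧ (t.label α).isSome := by
  by_cases h : α ∈ truncSet t n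
  · simp [trunc_label_of_mem h, h]
  · simp [trunc_label_of_not_mem h, h]

theorem trunc_le {s : OTree (Judg C R)} (hs : ∀ α ∈ truncSet t n, s.label α = t.label α) :
    trunc t n ≤ s := by
  refine ⟨fun α hα => ?_, fun α c u hα => ?_⟩
  · obtain ⟨hmem, hdef⟩ := trunc_label_isSome.mp hα
    rwa [hs α hmem]
  · obtain ⟨hmem, -⟩ := trunc_label_isSome.mp (Option.isSome_iff_exists.mpr ⟨_, hα⟩)
    rw [trunc_label_of_mem hmem] at hα
    refine ⟨⟨u, (hs α hmem).trans hα⟩, fun hu β => ?_⟩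
    obtain ⟨r, rfl⟩ := Option.isSome_iff_exists.mp hu
    have hβ := append_mem_truncSet hmem hα β
    rw [trunc_label_of_mem hβ, hs _ hβ]

theorem trunc_le_self : trunc t n ≤ t :=
  trunc_le fun _ _ => rfl

theorem trunc_mono (t : OTree (Judg C R)) : Monotone (trunc t) :=
  fun _ _ hnm => trunc_le fun _ hα => trunc_label_of_mem (truncSet_mono hnm hα)

theorem isLubSeq_trunc (t : OTree (Judg C R)) : IsLubSeq (trunc t) t :=
  ⟨fun _ => trunc_le_self, fun _ ht' => TreeLE.of_forall_exists_le fun α =>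
    ⟨trunc t α.length, trunc_le_self, ht' _, trunc_label_of_mem (Or.inl le_rfl)⟩⟩

theorem isTreeIn_trunc {Rs : Set (List (Judg C R) × Judg C R)}
    (hstart : ∀ c : C, (([] : List (Judg C R)), (c, none)) ∈ Rs) (ht : IsTreeIn Rs t) (n : ℕ) :
    IsTreeIn Rs (trunc t n) := by
  intro α l hl
  obtain ⟨hmem, -⟩ := trunc_label_isSome.mp (Option.isSome_iff_exists.mpr ⟨_, hl⟩)
  rw [trunc_label_of_mem hmem] at hl
  obtain ⟨ps, hps, hrule⟩ := ht α l hl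
  by_cases hkeep : α.length < n ∨ HasCompleteAncestor t n α
  · exact ⟨ps, fun i => by rw [trunc_label_of_mem (append_singleton_mem_truncSet.mpr hkeep), hps],
      hrule⟩
  -- an incomplete node at depth `n` outside complete subtrees becomes a leaf `c ⇒ ?`
  · obtain ⟨c, u⟩ := l
    have hlen : α.length ≤ n := hmem.resolve_right fun h => hkeep (Or.inr h)
    obtain rfl : u = none := by
      cases u with
      | none => rfl
      | some r => exact absurd (Or.inr ⟨α, c, r, List.prefix_refl α, hlen, hl⟩) hkeep
    exact ⟨[], fun i => trunc_label_of_not_mem (mt append_singleton_mem_truncSet.mp hkeep),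
      hstart c⟩

theorem treeFinite_trunc {Rs : Set (List (Judg C R) × Judg C R)} (ht : IsTreeIn Rs t)
    (hwf : WellFormed t) (n : ℕ) : TreeFinite (trunc t n) := by
  have hcomplete : {β | (∃ c r, t.label β = some (c, some r)) ∧ β.length ≤ n}.Finite :=
    (ht.finite_setOf_length_le n).subset fun β ⟨⟨c, r, hβ⟩, hlen⟩ => ⟨by simp [hβ], hlen⟩
  have hsubtrees := hcomplete.biUnion fun β ⟨⟨c, r, hβ⟩, _⟩ => (hwf β c r hβ).image (β ++ ·)
  refine ((ht.finite_setOf_length_le n).union hsubtrees).subset fun α hα => ?_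
  obtain ⟨hmem, hdef⟩ := trunc_label_isSome.mp hα
  rcases hmem with hlen | ⟨β, c, r, ⟨γ, rfl⟩, hlen, hβ⟩
  · exact Or.inl ⟨hdef, hlen⟩
  · exact Or.inr (Set.mem_biUnion ⟨⟨c, r, hβ⟩, hlen⟩ ⟨γ, hdef, rfl⟩)

theorem trunc_ne_trunc_succ (hfin : TreeFinite (trunc t n)) (hinf : ¬ TreeFinite t) :
    trunc t n ≠ trunc t (n + 1) := by
  obtain ⟨γ, hγ, hγn⟩ : ∃ γ, (t.label γ).isSome ∧ γ ∉ truncSet t n := by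
    by_contra! h
    exact hinf (hfin.subset fun γ hγ => trunc_label_isSome.mpr ⟨h γ hγ, hγ⟩)
  have hlen : n < γ.length := lt_of_not_ge fun h => hγn (Or.inl h)
  have hprefix : γ.take (n + 1) <+: γ := List.take_prefix _ _
  have hnot_mem : γ.take (n + 1) ∉ truncSet t n := by
    rintro (h | h)
    · simp only [List.length_take] at h
      omega
    · exact hγn (Or.inr (h.of_prefix hprefix))
  intro heq
  have hmem : ((trunc t (n + 1)).label (γ.take (n + 1))).isSome :=
    trunc_label_isSome.mpr ⟨Or.inl (by simp), t.isSome_of_prefix hprefix hγ⟩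
  exact hnot_mem (trunc_label_isSome.mp (heq ▸ hmem)).1

end Truncation

theorem wf_infinite_iff_lub_of_strict_chain {C R : Type}
    (Rules : Set (List (C × R) × (C × R))) (hbp : BP Rules) :
    (∀ f : ℕ → OTree (Judg C R),
      (∀ n, IsPET Rules (f n)) → (∀ n, TreeFinite (f n)) →
      (∀ n, TreeLT (f n) (f (n + 1))) →
      ∀ t : OTree (Judg C R), IsLubSeq f t →
        ¬ TreeFinite t ∧ WellFormed t ∧ IsPET Rules t) ∧
    (∀ t : OTree (Judg C R), IsPET Rules t → WellFormed t → ¬ TreeFinite t →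
      ∃ f : ℕ → OTree (Judg C R), (∀ n, IsPET Rules (f n)) ∧
        (∀ n, TreeFinite (f n)) ∧ (∀ n, TreeLT (f n) (f (n + 1))) ∧
        IsLubSeq f t) := by
  refine ⟨fun f hpet hfin hstrict t hlub => ?_, fun t hpet hwf hinf => ?_⟩
  · have hf : StrictMono f := strictMono_nat_of_lt_succ fun n => lt_iff_le_and_ne.mpr (hstrict n)
    obtain rfl : t = chainLimit hf.monotone :=
      le_antisymm (hlub.2 _ (le_chainLimit _)) (chainLimit_le _ hlub.1)
    exact ⟨not_treeFinite_of_strictMono hf (le_chainLimit _), wellFormed_chainLimit _ hfin,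
      isTreeIn_chainLimit hbp.rulesQ_length_le _ hpet⟩
  · have hfin n : TreeFinite (trunc t n) := treeFinite_trunc hpet hwf n
    exact ⟨trunc t, isTreeIn_trunc (fun c => Or.inl ⟨c, rfl⟩) hpet, hfin,
      fun n => ⟨trunc_mono t n.le_succ, trunc_ne_trunc_succ (hfin n) hinf⟩, isLubSeq_trunc t⟩
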